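/- Let A be a bounded normal operator on a complex Hilbert space H and let g ∈ H be such that A is K(A,g)-reduced. Then for every polynomial q(z,w) in two commuting variables with complex coefficients, the vector q(A, A*) g belongs to the closure of the Krylov subspace K(A,g). In particular (A*)^k A^n g ∈ closure K(A,g) for all k, n ∈ ℕ₀. -/

import Mathlib

/-!
Since `A` leaves `K(A, g)ᗮ` invariant, `A*` leaves `(K(A, g)ᗮ)ᗮ`, the closure of `K(A, g)`,
invariant. That closure contains every `A^n g`, hence every `(A*)^k A^n g`, and it is a subspace.
-/

open ContinuousLinearMap Module.End

section Module

variable {R M : Type*} [Semiring R] [AddCommMonoid M] [Module R M] [TopologicalSpace M]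

abbrev krylovSubspace (A : M →L[R] M) (g : M) : Submodule R M :=
  Submodule.span R (Set.range fun k : ℕ => (A ^ k) g)

theorem pow_apply_mem_krylovSubspace (A : M →L[R] M) (g : M) (n : ℕ) :
    (A ^ n) g ∈ krylovSubspace A g :=
  Submodule.subset_span ⟨n, rfl⟩

theorem pow_apply_mem_of_mem_invtSubmodule {T : M →L[R] M} {K : Submodule R M}
    (h : K ∈ invtSubmodule T.toLinearMap) (k : ℕ) {x : M} (hx : x ∈ K) : (T ^ k) x ∈ K := by
  rw [FunLike.coe_pow_eq_iterate]
  exact ((mem_invtSubmodule_iff_mapsTo _).mp h).iterate k hx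

end Module

section InnerProductSpace

variable {𝕜 E : Type*} [RCLike 𝕜] [NormedAddCommGroup E] [InnerProductSpace 𝕜 E] [CompleteSpace E]

theorem Submodule.topologicalClosure_mem_invtSubmodule_adjoint {T : E →L[𝕜] E}
    {K : Submodule 𝕜 E} (h : Kᗮ ∈ invtSubmodule T.toLinearMap) :
    K.topologicalClosure ∈ invtSubmodule (adjoint T).toLinearMap := by
  rw [← K.orthogonal_orthogonal_eq_closure]
  exact orthogonal_mem_invtSubmodule (by rwa [adjoint_adjoint])

theorem adjoint_pow_apply_pow_mem_closure_krylovSubspace {A : E →L[𝕜] E} {g : E}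
    (h : (krylovSubspace A g)ᗮ ∈ invtSubmodule A.toLinearMap) (k n : ℕ) :
    (adjoint A ^ k) ((A ^ n) g) ∈ (krylovSubspace A g).topologicalClosure :=
  pow_apply_mem_of_mem_invtSubmodule (Submodule.topologicalClosure_mem_invtSubmodule_adjoint h) k
    ((krylovSubspace A g).le_topologicalClosure (pow_apply_mem_krylovSubspace A g n))

end InnerProductSpace

theorem polynomial_in_A_and_adjoint_mem_krylov_closure_general
    {H : Type*} [NormedAddCommGroup H] [InnerProductSpace ℂ H] [CompleteSpace H]
    (A : H →L[ℂ] H) (g : H)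
    (hred₂ : ∀ x ∈ (Submodule.span ℂ (Set.range fun k : ℕ => (A ^ k) g))ᗮ,
      A x ∈ (Submodule.span ℂ (Set.range fun k : ℕ => (A ^ k) g))ᗮ) :
    (∀ q : (ℕ × ℕ) →₀ ℂ,
      (q.sum fun kn c => c • (((ContinuousLinearMap.adjoint A) ^ kn.1) ((A ^ kn.2) g)))
        ∈ (Submodule.span ℂ (Set.range fun k : ℕ => (A ^ k) g)).topologicalClosure) ∧
    (∀ k n : ℕ,
      ((ContinuousLinearMap.adjoint A) ^ k) ((A ^ n) g)
        ∈ (Submodule.span ℂ (Set.range fun k : ℕ => (A ^ k) g)).topologicalClosure) := by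
  have hmem := adjoint_pow_apply_pow_mem_closure_krylovSubspace
    ((mem_invtSubmodule_iff_forall_mem_of_mem _).mpr hred₂)
  exact ⟨fun q => Submodule.sum_mem _ fun kn _ => Submodule.smul_mem _ _ (hmem kn.1 kn.2), hmem⟩

/-- Let `A` be a bounded normal operator on a complex Hilbert space and
`g ∈ H` such that `A` is `K(A,g)`-reduced.  Then for every polynomial
`q(z,w) = Σ c_{k,n} w^k z^n` in two commuting variables (encoded by its finitely supported
coefficient function `q : ℕ × ℕ →₀ ℂ`), the vector `q(A, A*) g` belongs to the closure of
the Krylov subspace `K(A,g) = span{A^k g : k ∈ ℕ}`; in particular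
`(A*)^k A^n g ∈ closure K(A,g)` for all `k, n ∈ ℕ`. -/
theorem polynomial_in_A_and_adjoint_mem_krylov_closure
    {H : Type*} [NormedAddCommGroup H] [InnerProductSpace ℂ H] [CompleteSpace H]
    (A : H →L[ℂ] H) (hnormal : IsStarNormal A) (g : H)
    (hred₁ : ∀ x ∈ (Submodule.span ℂ (Set.range fun k : ℕ => (A ^ k) g)).topologicalClosure,
      A x ∈ (Submodule.span ℂ (Set.range fun k : ℕ => (A ^ k) g)).topologicalClosure)
    (hred₂ : ∀ x ∈ (Submodule.span ℂ (Set.range fun k : ℕ => (A ^ k) g))ᗮ,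
      A x ∈ (Submodule.span ℂ (Set.range fun k : ℕ => (A ^ k) g))ᗮ) :
    (∀ q : (ℕ × ℕ) →₀ ℂ,
      (q.sum fun kn c => c • (((ContinuousLinearMap.adjoint A) ^ kn.1) ((A ^ kn.2) g)))
        ∈ (Submodule.span ℂ (Set.range fun k : ℕ => (A ^ k) g)).topologicalClosure) ∧
    (∀ k n : ℕ,
      ((ContinuousLinearMap.adjoint A) ^ k) ((A ^ n) g)
        ∈ (Submodule.span ℂ (Set.range fun k : ℕ => (A ^ k) g)).topologicalClosure) :=
  polynomial_in_A_and_adjoint_mem_krylov_closure_general A g hred₂
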